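/- Let φ be a Leibniz 2-cocycle on the Virasoro (Witt) algebra with basis {L_n : n ∈ ℤ}, [L_n,L_m] = (m−n)L_{n+m}, such that φ(L_0, L_n) = 0 for all n. Then (m+n)·φ(L_m, L_n) = 0 for all m, n ∈ ℤ, and φ(L_n, L_{-n}) + φ(L_{-n}, L_n) = 0 for all n. -/
import Mathlib


abbrev W : Type := ℤ →₀ ℂ

noncomputable def Lw (n : ℤ) : W := Finsupp.single n 1

/-- The bilinear bracket of the Witt algebra: `[L n, L m] = (m - n) • L (n+m)`. -/
noncomputable def bkW : W →ₗ[ℂ] W →ₗ[ℂ] W :=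
  Finsupp.lsum ℂ fun n => LinearMap.toSpanSingleton ℂ (W →ₗ[ℂ] W)
    (Finsupp.lsum ℂ fun m => LinearMap.toSpanSingleton ℂ W (((m : ℂ) - n) • Lw (n + m)))

/-- `φ` is a Leibniz 2-cocycle on the Witt algebra. -/
def IsLeibnizCocycleW (φ : W →ₗ[ℂ] W →ₗ[ℂ] ℂ) : Prop :=
  ∀ x y z : W, φ x (bkW y z) = φ (bkW x y) z - φ (bkW x z) y

lemma bkW_Lw (n m : ℤ) : bkW (Lw n) (Lw m) = ((m : ℂ) - n) • Lw (n + m) := by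
  rw [bkW, Lw, Lw, Finsupp.lsum_single, LinearMap.toSpanSingleton_apply, one_smul,
    Finsupp.lsum_single, LinearMap.toSpanSingleton_apply, one_smul]

lemma key (φ : W →ₗ[ℂ] W →ₗ[ℂ] ℂ) (hco : IsLeibnizCocycleW φ) (a b c : ℤ) :
    ((c : ℂ) - b) * φ (Lw a) (Lw (b + c)) =
      ((b : ℂ) - a) * φ (Lw (a + b)) (Lw c) - ((c : ℂ) - a) * φ (Lw (a + c)) (Lw b) := by
  have := hco (Lw a) (Lw b) (Lw c)
  simpa [bkW_Lw, map_smul, smul_eq_mul] using this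

theorem stmt6 (φ : W →ₗ[ℂ] W →ₗ[ℂ] ℂ) (hco : IsLeibnizCocycleW φ)
    (h : ∀ n : ℤ, φ (Lw 0) (Lw n) = 0) :
    (∀ m n : ℤ, ((m + n : ℤ) : ℂ) * φ (Lw m) (Lw n) = 0) ∧
    (∀ n : ℤ, φ (Lw n) (Lw (-n)) + φ (Lw (-n)) (Lw n) = 0) := by
  have hz : ∀ k : ℤ, k ≠ 0 → φ (Lw k) (Lw 0) = 0 := by
    intro k hk
    have := key φ hco 0 k 0
    simp [h] at this
    rcases this with h1 | h1
    · exact absurd (by exact_mod_cast h1) hk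
    · exact h1
  constructor
  · intro m n
    by_cases hmn : m + n = 0
    · simp [hmn]
    · have hk := key φ hco m n 0
      simp [hz (m + n) hmn] at hk
      have : -((n : ℂ) + m) * φ (Lw m) (Lw n) = 0 := by linear_combination hk
      push_cast
      linear_combination -this
  · intro n
    by_cases hn : n = 0
    · subst hn; simp [h]
    · have hk := key φ hco 0 n (-n)
      simp [h] at hk
      have hn' : (n : ℂ) ≠ 0 := Int.cast_ne_zero.mpr hn
      have : (n : ℂ) * (φ (Lw n) (Lw (-n)) + φ (Lw (-n)) (Lw n)) = 0 := by
        linear_combination -hk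
      rcases mul_eq_zero.mp this with h1 | h1
      · exact absurd h1 hn'
      · exact h1
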